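/- Let (Ω,d) be a bounded minimally nice metric space whose metric completion Ω̄^d is compact, and suppose (Ω,d) is quasihyperbolically visible. Then every quasihyperbolic geodesic ray γ : [0,∞) → (Ω,k_Ω) lands at the metric boundary, i.e. lim_{t→∞} γ(t) exists in the metric d and belongs to ∂_dΩ. -/

import Mathlib

open Set Filter Metric Topology UniformConvergence ENNReal

noncomputable section

variable {Ω : Type*} [MetricSpace Ω]

/-- The metric boundary `∂_dΩ` of a metric space `Ω`: the complement of (the image of) `Ω`
in its metric completion `Ω̄^d`. -/
def metricBoundary (Ω : Type*) [MetricSpace Ω] : Set (UniformSpace.Completion Ω) :=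
  (Set.range ((↑) : Ω → UniformSpace.Completion Ω))ᶜ

/-- `δ_Ω(z)`: the distance from `z ∈ Ω` to the metric boundary `∂_dΩ`. -/
def deltaOmega (z : Ω) : ℝ :=
  Metric.infDist ((z : UniformSpace.Completion Ω)) (metricBoundary Ω)

/-- A rectifiable curve in `Ω`, defined on `[a,b]`, joining `x` to `y`. -/
def IsCurveIn (γ : ℝ → Ω) (a b : ℝ) (x y : Ω) : Prop :=
  a ≤ b ∧ ContinuousOn γ (Set.Icc a b) ∧ γ a = x ∧ γ b = y ∧
    eVariationOn γ (Set.Icc a b) ≠ ⊤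

/-- The `d`-arclength function `t ↦ ℓ_d(γ|_{[a,t]})` of a curve `γ` on `[a,b]` (clamped). -/
def arcLengthFun (γ : ℝ → Ω) (a b : ℝ) : ℝ → ℝ :=
  fun t => (eVariationOn γ (Set.Icc a (max a (min t b)))).toReal

theorem arcLengthFun_monotone {γ : ℝ → Ω} {a b : ℝ} (hab : a ≤ b)
    (hrect : eVariationOn γ (Set.Icc a b) ≠ ⊤) : Monotone (arcLengthFun γ a b) := by
  intro s t hst
  apply ENNReal.toReal_mono
  · exact ne_top_of_le_ne_top hrect
      (eVariationOn.mono γ (Set.Icc_subset_Icc_right (max_le hab (min_le_right _ _))))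
  · exact eVariationOn.mono γ (Set.Icc_subset_Icc_right
      (max_le_max le_rfl (min_le_min hst le_rfl)))

/-- The quasihyperbolic length `ℓ_k(γ) = ∫_γ |dz| / δ_Ω(z)` of a rectifiable curve
`γ : [a,b] → Ω`: the Lebesgue–Stieltjes integral of `1/δ_Ω(γ(t))` with respect to the
arclength function of `γ`.  (Non-rectifiable "curves" get length `⊤`.) -/
def qhLength (γ : ℝ → Ω) (a b : ℝ) : ℝ≥0∞ :=
  if h : a ≤ b ∧ eVariationOn γ (Set.Icc a b) ≠ ⊤ then
    ∫⁻ t in Set.Icc a b, ENNReal.ofReal (1 / deltaOmega (γ t))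
      ∂(arcLengthFun_monotone h.1 h.2).stieltjesFunction.measure
  else ⊤

/-- The quasihyperbolic distance (as an extended real): the infimum of the quasihyperbolic
lengths of rectifiable curves in `Ω` joining `x` to `y`. -/
def qhEDist (x y : Ω) : ℝ≥0∞ :=
  ⨅ (γ : ℝ → Ω) (a : ℝ) (b : ℝ) (_ : IsCurveIn γ a b x y), qhLength γ a b

/-- The quasihyperbolic metric `k_Ω`. -/
def qhDist (x y : Ω) : ℝ :=
  (qhEDist x y).toReal

/-- The inner (length) metric `λ_Ω` associated to `(Ω,d)`, as an extended real. -/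
def innerEDist (x y : Ω) : ℝ≥0∞ :=
  ⨅ (γ : ℝ → Ω) (a : ℝ) (b : ℝ) (_ : IsCurveIn γ a b x y), eVariationOn γ (Set.Icc a b)

/-- `(Ω,d)` is minimally nice: rectifiably connected, locally compact, non-complete, and the
identity map from `(Ω,d)` to `(Ω,λ_Ω)` is continuous. -/
structure MinimallyNice (Ω : Type*) [MetricSpace Ω] : Prop where
  rectifiablyConnected : ∀ x y : Ω, ∃ (γ : ℝ → Ω) (a b : ℝ), IsCurveIn γ a b x y
  locallyCompact : LocallyCompactSpace Ω
  nonComplete : ¬ CompleteSpace Ω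
  idContinuous : ∀ x : Ω, Filter.Tendsto (fun y => innerEDist x y) (nhds x) (nhds 0)

/-- `γ` is a geodesic of the quasihyperbolic metric on the parameter set `s`
(parametrized by `k_Ω`-arclength). -/
def IsQHGeodesicOn (γ : ℝ → Ω) (s : Set ℝ) : Prop :=
  ∀ ⦃u⦄, u ∈ s → ∀ ⦃v⦄, v ∈ s → qhDist (γ u) (γ v) = |u - v|

/-- A quasihyperbolic geodesic segment from `x` to `y`. -/
def IsQHGeodesicSeg (γ : ℝ → Ω) (a b : ℝ) (x y : Ω) : Prop :=
  a ≤ b ∧ γ a = x ∧ γ b = y ∧ IsQHGeodesicOn γ (Set.Icc a b)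

/-- A quasihyperbolic geodesic ray `γ : [0,∞) → (Ω, k_Ω)`. -/
def IsQHGeodesicRay (γ : ℝ → Ω) : Prop :=
  IsQHGeodesicOn γ (Set.Ici 0)

/-- A quasihyperbolic geodesic line `γ : (-∞,∞) → (Ω, k_Ω)`. -/
def IsQHGeodesicLine (γ : ℝ → Ω) : Prop :=
  IsQHGeodesicOn γ Set.univ

/-- `(Ω,d)` is quasihyperbolically visible: for every pair of distinct points `p,q` of the
metric boundary there is a compact set `K ⊆ Ω` such that for all sequences `xₙ → p`, `yₙ → q`
(in the metric `d`), every quasihyperbolic geodesic joining `xₙ` and `yₙ` meets `K`. -/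
def QHVisible (Ω : Type*) [MetricSpace Ω] : Prop :=
  ∀ p q : UniformSpace.Completion Ω, p ∈ metricBoundary Ω → q ∈ metricBoundary Ω → p ≠ q →
    ∃ K : Set Ω, IsCompact K ∧
      ∀ x y : ℕ → Ω,
        Filter.Tendsto (fun n => ((x n : Ω) : UniformSpace.Completion Ω))
          Filter.atTop (nhds p) →
        Filter.Tendsto (fun n => ((y n : Ω) : UniformSpace.Completion Ω))
          Filter.atTop (nhds q) →
        ∀ (n : ℕ) (γ : ℝ → Ω) (a b : ℝ), IsQHGeodesicSeg γ a b (x n) (y n) →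
          ∃ t ∈ Set.Icc a b, γ t ∈ K

/-- `(Ω, k_Ω)` is Gromov hyperbolic: there is `δ ≥ 0` such that every quasihyperbolic
geodesic triangle is `δ`-thin. -/
def QHGromovHyperbolic (Ω : Type*) [MetricSpace Ω] : Prop :=
  ∃ δ : ℝ, 0 ≤ δ ∧
    ∀ (x y z : Ω) (γ₁ γ₂ γ₃ : ℝ → Ω) (a₁ b₁ a₂ b₂ a₃ b₃ : ℝ),
      IsQHGeodesicSeg γ₁ a₁ b₁ x y → IsQHGeodesicSeg γ₂ a₂ b₂ y z →
      IsQHGeodesicSeg γ₃ a₃ b₃ x z →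
      ∀ t ∈ Set.Icc a₁ b₁,
        ∃ u, (u ∈ Set.Icc a₂ b₂ ∧ qhDist (γ₁ t) (γ₂ u) ≤ δ) ∨
             (u ∈ Set.Icc a₃ b₃ ∧ qhDist (γ₁ t) (γ₃ u) ≤ δ)

/-- `(Ω,d)` is quasiconvex: some `A ≥ 1` so that every two points are joined by a curve of
`d`-length at most `A·d(x,y)`. -/
def QuasiconvexSpace (Ω : Type*) [MetricSpace Ω] : Prop :=
  ∃ A : ℝ, 1 ≤ A ∧ ∀ x y : Ω, ∃ (γ : ℝ → Ω) (a b : ℝ), IsCurveIn γ a b x y ∧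
    eVariationOn γ (Set.Icc a b) ≤ ENNReal.ofReal (A * dist x y)

/-- The Gehring–Hayman theorem holds in `(Ω,d)`: quasihyperbolic geodesics are essentially
the shortest curves, up to a multiplicative constant `C ≥ 1`. -/
def GehringHayman (Ω : Type*) [MetricSpace Ω] : Prop :=
  ∃ C : ℝ, 1 ≤ C ∧ ∀ x y : Ω, ∀ (γ : ℝ → Ω) (a b : ℝ), IsQHGeodesicSeg γ a b x y →
    ∀ (σ : ℝ → Ω) (a' b' : ℝ), IsCurveIn σ a' b' x y →
      eVariationOn γ (Set.Icc a b) ≤ ENNReal.ofReal C * eVariationOn σ (Set.Icc a' b')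

/-!
Since the completion is compact, the ray `γ` has a cluster point there; it suffices to show that
every cluster point lies on `∂_dΩ` and that there is only one.

A cluster point `z ∈ Ω` is impossible: continuity of `id : (Ω, d) → (Ω, λ_Ω)` at `z` joins any two
points near `z`, through `z`, by a curve of length `< δ_Ω(z)/2` staying where `δ_Ω ≥ 3δ_Ω(z)/4`,
so their quasihyperbolic distance is at most `1`; but the ray comes back near `z` at times more
than `1` apart.

Two distinct cluster points `p, q ∈ ∂_dΩ` give subsegments of `γ`, arbitrarily far out, from
points near `p` to points near `q`. By visibility they all meet one compact `K ⊆ Ω`, which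
produces a cluster point of `γ` in `Ω`.
-/

open MeasureTheory
open UniformSpace (Completion)

theorem MapClusterPt.exists_seq_ge_tendsto {X ι : Type*} [TopologicalSpace X]
    [FirstCountableTopology X] [Preorder ι] [IsCountablyGenerated (atTop : Filter ι)]
    {f : ι → X} {x : X} (hx : MapClusterPt x atTop f) (s : ℕ → ι) :
    ∃ u : ℕ → ι, s ≤ u ∧ Tendsto (f ∘ u) atTop (𝓝 x) := by
  obtain ⟨ψ, hfψ, hψ⟩ := hx.exists_seq_tendsto
  choose m hm using fun n => ((hψ.eventually_ge_atTop (s n)).and (eventually_ge_atTop n)).exists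
  exact ⟨ψ ∘ m, fun n => (hm n).1, hfψ.comp (tendsto_atTop_mono (fun n => (hm n).2) tendsto_id)⟩

theorem isOpen_range_coe_completion [LocallyCompactSpace Ω] :
    IsOpen (range ((↑) : Ω → Completion Ω)) := by
  refine Metric.isOpen_iff.2 ?_
  rintro _ ⟨z, rfl⟩
  obtain ⟨K, hK, hKz⟩ := exists_compact_mem_nhds z
  obtain ⟨r, hr, hrK⟩ := Metric.mem_nhds_iff.1 hKz
  refine ⟨r, hr, ?_⟩
  calc ball (z : Completion Ω) r
      ⊆ closure (ball (z : Completion Ω) r ∩ range ((↑) : Ω → Completion Ω)) :=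
        (Completion.denseRange_coe).open_subset_closure_inter isOpen_ball
    _ ⊆ ((↑) : Ω → Completion Ω) '' K := by
        refine closure_minimal ?_ (hK.image (Completion.continuous_coe Ω)).isClosed
        rintro _ ⟨hw, w, rfl⟩
        exact ⟨w, hrK (by simpa [Completion.dist_eq] using hw), rfl⟩
    _ ⊆ range ((↑) : Ω → Completion Ω) := image_subset_range _ _

theorem isClosed_metricBoundary [LocallyCompactSpace Ω] : IsClosed (metricBoundary Ω) :=
  isOpen_range_coe_completion.isClosed_compl

theorem metricBoundary_nonempty (h : ¬ CompleteSpace Ω) : (metricBoundary Ω).Nonempty := by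
  rw [nonempty_iff_ne_empty, Ne, metricBoundary, compl_empty_iff]
  intro hrange
  rw [completeSpace_iff_isComplete_range (Completion.isUniformInducing_coe Ω), hrange] at h
  exact h isComplete_univ

theorem deltaOmega_pos [LocallyCompactSpace Ω] (h : ¬ CompleteSpace Ω) (z : Ω) :
    0 < deltaOmega z :=
  (isClosed_metricBoundary.notMem_iff_infDist_pos (metricBoundary_nonempty h)).1
    fun hz => hz ⟨z, rfl⟩

theorem deltaOmega_le_add_dist (z w : Ω) : deltaOmega z ≤ deltaOmega w + dist z w := by
  simpa only [deltaOmega, Completion.dist_eq] using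
    infDist_le_infDist_add_dist (x := (z : Completion Ω)) (y := w) (s := metricBoundary Ω)

section QHLength

variable {σ : ℝ → Ω} {a b : ℝ}

theorem arcLengthFun_of_le (hab : a ≤ b) {t : ℝ} (hbt : b ≤ t) :
    arcLengthFun σ a b t = (eVariationOn σ (Icc a b)).toReal := by
  rw [arcLengthFun, min_eq_right hbt, max_eq_right hab]

theorem measure_Icc_le_eVariationOn (hab : a ≤ b) (hvar : eVariationOn σ (Icc a b) ≠ ⊤) :
    (arcLengthFun_monotone hab hvar).stieltjesFunction.measure (Icc a b) ≤
      eVariationOn σ (Icc a b) := by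
  have hmono := arcLengthFun_monotone hab hvar
  set g := hmono.stieltjesFunction
  have hg_b : g b ≤ (eVariationOn σ (Icc a b)).toReal :=
    (hmono.rightLim_le (lt_add_one b)).trans_eq (arcLengthFun_of_le hab (by linarith))
  have hg_nonneg : 0 ≤ g (a - 1) := ENNReal.toReal_nonneg.trans (hmono.le_rightLim le_rfl)
  calc g.measure (Icc a b) ≤ g.measure (Ioc (a - 1) b) :=
        measure_mono (Icc_subset_Ioc_iff hab |>.2 ⟨by linarith, le_rfl⟩)
    _ = ENNReal.ofReal (g b - g (a - 1)) := g.measure_Ioc _ _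
    _ ≤ ENNReal.ofReal (eVariationOn σ (Icc a b)).toReal := ENNReal.ofReal_le_ofReal (by linarith)
    _ = eVariationOn σ (Icc a b) := ENNReal.ofReal_toReal hvar

theorem qhLength_le_of_le_deltaOmega (hab : a ≤ b) (hvar : eVariationOn σ (Icc a b) ≠ ⊤)
    {c : ℝ} (hc : 0 < c) (hδ : ∀ t ∈ Icc a b, c ≤ deltaOmega (σ t)) :
    qhLength σ a b ≤ ENNReal.ofReal (1 / c) * eVariationOn σ (Icc a b) := by
  rw [qhLength, dif_pos ⟨hab, hvar⟩]
  calc _ ≤ ∫⁻ _ in Icc a b, ENNReal.ofReal (1 / c)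
          ∂(arcLengthFun_monotone hab hvar).stieltjesFunction.measure :=
        setLIntegral_mono measurable_const fun t ht =>
          ENNReal.ofReal_le_ofReal (one_div_le_one_div_of_le hc (hδ t ht))
    _ = ENNReal.ofReal (1 / c) *
          (arcLengthFun_monotone hab hvar).stieltjesFunction.measure (Icc a b) :=
        setLIntegral_const _ _
    _ ≤ ENNReal.ofReal (1 / c) * eVariationOn σ (Icc a b) :=
        mul_le_mul_right (measure_Icc_le_eVariationOn hab hvar) _

theorem qhEDist_le_qhLength {x y : Ω} (h : IsCurveIn σ a b x y) : qhEDist x y ≤ qhLength σ a b :=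
  iInf_le_of_le σ <| iInf_le_of_le a <| iInf_le_of_le b <| iInf_le _ h

theorem qhEDist_le_of_image_subset_closedBall {x y z : Ω} {r : ℝ} (h : IsCurveIn σ a b x y)
    (hr : r < deltaOmega z) (hσ : σ '' Icc a b ⊆ closedBall z r) :
    qhEDist x y ≤ ENNReal.ofReal (1 / (deltaOmega z - r)) * eVariationOn σ (Icc a b) := by
  refine (qhEDist_le_qhLength h).trans <|
    qhLength_le_of_le_deltaOmega h.1 h.2.2.2.2 (by linarith) fun t ht => ?_
  have hdist : dist (σ t) z ≤ r := hσ (mem_image_of_mem σ ht)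
  linarith [deltaOmega_le_add_dist z (σ t), dist_comm z (σ t)]

end QHLength

section Curves

variable {σ σ₁ σ₂ : ℝ → Ω} {a b c : ℝ} {x y z : Ω}

theorem eVariationOn_comp_const_sub_Icc (σ : ℝ → Ω) (a b c : ℝ) :
    eVariationOn (fun t => σ (c - t)) (Icc (c - b) (c - a)) = eVariationOn σ (Icc a b) := by
  have := eVariationOn.comp_eq_of_antitoneOn σ (fun t => c - t) (t := Icc (c - b) (c - a))
    fun _ _ _ _ h => sub_le_sub_left h c
  simpa only [Function.comp_def, image_const_sub_Icc, _root_.sub_sub_cancel] using this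

theorem image_comp_const_sub_Icc {α : Type*} (f : ℝ → α) (a b c : ℝ) :
    (fun t => f (c - t)) '' Icc (c - b) (c - a) = f '' Icc a b := by
  rw [← image_image f (fun t => c - t), image_const_sub_Icc]
  simp only [_root_.sub_sub_cancel]

theorem IsCurveIn.comp_const_sub (h : IsCurveIn σ a b x y) (c : ℝ) :
    IsCurveIn (fun t => σ (c - t)) (c - b) (c - a) y x := by
  obtain ⟨hab, hcont, rfl, rfl, hvar⟩ := h
  refine ⟨by linarith, ?_, by simp, by simp, by rwa [eVariationOn_comp_const_sub_Icc]⟩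
  refine hcont.comp (continuous_const.sub continuous_id).continuousOn fun t ht => ?_
  exact ⟨by linarith [ht.2], by linarith [ht.1]⟩

theorem eVariationOn_append (hab : a ≤ b) (hbc : b ≤ c) (hb : σ₁ b = σ₂ b) :
    eVariationOn (fun t => if t ≤ b then σ₁ t else σ₂ t) (Icc a c) =
      eVariationOn σ₁ (Icc a b) + eVariationOn σ₂ (Icc b c) := by
  have h₁ : EqOn (fun t => if t ≤ b then σ₁ t else σ₂ t) σ₁ (Icc a b) :=
    fun t ht => if_pos ht.2
  have h₂ : EqOn (fun t => if t ≤ b then σ₁ t else σ₂ t) σ₂ (Icc b c) := by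
    intro t ht
    rcases ht.1.eq_or_lt with rfl | hlt
    · simpa using hb
    · exact if_neg hlt.not_ge
  rw [← eVariationOn.eq_of_eqOn h₁, ← eVariationOn.eq_of_eqOn h₂]
  simpa using (eVariationOn.Icc_add_Icc (fun t => if t ≤ b then σ₁ t else σ₂ t)
    (s := univ) hab hbc (mem_univ b)).symm

theorem image_append_subset {α : Type*} (f g : ℝ → α) (a b c : ℝ) :
    (fun t => if t ≤ b then f t else g t) '' Icc a c ⊆ f '' Icc a b ∪ g '' Icc b c := by
  rintro _ ⟨t, ht, rfl⟩
  by_cases htb : t ≤ b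
  · exact .inl ⟨t, ⟨ht.1, htb⟩, (if_pos htb).symm⟩
  · exact .inr ⟨t, ⟨(not_le.1 htb).le, ht.2⟩, (if_neg htb).symm⟩

theorem IsCurveIn.append (h₁ : IsCurveIn σ₁ a b x y) (h₂ : IsCurveIn σ₂ b c y z) :
    IsCurveIn (fun t => if t ≤ b then σ₁ t else σ₂ t) a c x z := by
  obtain ⟨hab, hcont₁, rfl, hb₁, hvar₁⟩ := h₁
  obtain ⟨hbc, hcont₂, hb₂, rfl, hvar₂⟩ := h₂
  refine ⟨hab.trans hbc, ?_, if_pos hab, ?_, ?_⟩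
  · refine ContinuousOn.if (fun t ht => ?_) (hcont₁.mono fun t ht => ?_)
      (hcont₂.mono fun t ht => ?_)
    · rw [show t = b from frontier_Iic_subset b ht.2, hb₁, hb₂]
    · exact ⟨ht.1.1, isClosed_Iic.closure_subset ht.2⟩
    · exact ⟨closure_minimal (fun t ht => (not_le.1 ht).le) isClosed_Ici ht.2, ht.1.2⟩
  · rcases hbc.eq_or_lt with rfl | hlt
    · simpa using hb₁.trans hb₂.symm
    · exact if_neg hlt.not_ge
  · rw [eVariationOn_append hab hbc (hb₁.trans hb₂.symm)]
    exact ENNReal.add_ne_top.2 ⟨hvar₁, hvar₂⟩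

end Curves

section Joining

variable {σ₁ σ₂ : ℝ → Ω} {a₁ b₁ a₂ b₂ : ℝ} {x y z : Ω}

theorem IsCurveIn.image_subset_closedEBall {σ : ℝ → Ω} {a b : ℝ} (h : IsCurveIn σ a b z x) :
    σ '' Icc a b ⊆ closedEBall z (eVariationOn σ (Icc a b)) := by
  rintro _ ⟨t, ht, rfl⟩
  simpa only [mem_closedEBall, h.2.2.1] using eVariationOn.edist_le σ ht (left_mem_Icc.2 h.1)

theorem IsCurveIn.exists_join (h₁ : IsCurveIn σ₁ a₁ b₁ z x) (h₂ : IsCurveIn σ₂ a₂ b₂ z y) :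
    ∃ σ a b, IsCurveIn σ a b x y ∧
      eVariationOn σ (Icc a b) = eVariationOn σ₁ (Icc a₁ b₁) + eVariationOn σ₂ (Icc a₂ b₂) ∧
      σ '' Icc a b ⊆ σ₁ '' Icc a₁ b₁ ∪ σ₂ '' Icc a₂ b₂ := by
  -- reflect `σ₁` so that it ends at the parameter `a₂` where `σ₂` starts
  have hsub : a₁ + a₂ - a₁ = a₂ := add_sub_cancel_left a₁ a₂
  have h₁' := h₁.comp_const_sub (a₁ + a₂)
  have hvar := eVariationOn_comp_const_sub_Icc σ₁ a₁ b₁ (a₁ + a₂)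
  have himage := image_comp_const_sub_Icc σ₁ a₁ b₁ (a₁ + a₂)
  rw [hsub] at h₁' hvar himage
  refine ⟨_, _, _, h₁'.append h₂, ?_, ?_⟩
  · rw [eVariationOn_append h₁'.1 h₂.1 (h₁'.2.2.2.1.trans h₂.2.2.1.symm), hvar]
  · exact (image_append_subset _ _ _ _ _).trans (union_subset_union_left _ himage.subset)

theorem exists_curve_of_innerEDist_lt {c : ℝ≥0∞} (h : innerEDist x y < c) :
    ∃ σ a b, IsCurveIn σ a b x y ∧ eVariationOn σ (Icc a b) < c := by
  simpa only [innerEDist, iInf_lt_iff, exists_prop] using h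

end Joining

theorem MinimallyNice.eventually_qhDist_le_one (hΩ : MinimallyNice Ω) (z : Ω) :
    ∀ᶠ p in 𝓝 (z, z), qhDist p.1 p.2 ≤ 1 := by
  have := hΩ.locallyCompact
  set δ := deltaOmega z
  have hδ : 0 < δ := deltaOmega_pos hΩ.nonComplete z
  have hshort : ∀ᶠ w in 𝓝 z, innerEDist z w < ENNReal.ofReal (δ / 4) :=
    hΩ.idContinuous z (gt_mem_nhds (ENNReal.ofReal_pos.2 (by positivity)))
  rw [nhds_prod_eq]
  filter_upwards [hshort.prod_mk hshort] with ⟨x, y⟩ ⟨hx, hy⟩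
  obtain ⟨σ₁, a₁, b₁, h₁, hv₁⟩ := exists_curve_of_innerEDist_lt hx
  obtain ⟨σ₂, a₂, b₂, h₂, hv₂⟩ := exists_curve_of_innerEDist_lt hy
  obtain ⟨σ, a, b, h, hv, himage⟩ := h₁.exists_join h₂
  have hball : σ '' Icc a b ⊆ closedBall z (δ / 4) := by
    rw [← closedEBall_ofReal (by positivity)]
    exact himage.trans <| union_subset
      (h₁.image_subset_closedEBall.trans (closedEBall_subset_closedEBall hv₁.le))
      (h₂.image_subset_closedEBall.trans (closedEBall_subset_closedEBall hv₂.le))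
  have hlen : eVariationOn σ (Icc a b) ≤ ENNReal.ofReal (δ / 2) := by
    rw [hv, show δ / 2 = δ / 4 + δ / 4 by ring, ENNReal.ofReal_add (by positivity) (by positivity)]
    exact add_le_add hv₁.le hv₂.le
  have hqh : qhEDist x y ≤ ENNReal.ofReal 1 :=
    calc qhEDist x y ≤ ENNReal.ofReal (1 / (δ - δ / 4)) * ENNReal.ofReal (δ / 2) :=
          (qhEDist_le_of_image_subset_closedBall h (by linarith) hball).trans
            (mul_le_mul_right hlen _)
      _ = ENNReal.ofReal (2 / 3) := by
          rw [← ENNReal.ofReal_mul (one_div_nonneg.2 (by linarith))]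
          congr 1
          field_simp
          ring
      _ ≤ ENNReal.ofReal 1 := ENNReal.ofReal_le_ofReal (by norm_num)
  exact ENNReal.toReal_le_of_le_ofReal zero_le_one hqh

section GeodesicRay

variable {γ : ℝ → Ω}

theorem IsQHGeodesicRay.isQHGeodesicSeg (hγ : IsQHGeodesicRay γ) {a b : ℝ} (ha : 0 ≤ a)
    (hab : a ≤ b) : IsQHGeodesicSeg γ a b (γ a) (γ b) :=
  ⟨hab, rfl, rfl, fun _ hu _ hv => hγ (ha.trans hu.1) (ha.trans hv.1)⟩

theorem IsQHGeodesicRay.not_mapClusterPt (hΩ : MinimallyNice Ω) (hγ : IsQHGeodesicRay γ)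
    (z : Ω) : ¬ MapClusterPt z atTop γ := by
  intro hz
  have hnear := hΩ.eventually_qhDist_le_one z
  rw [nhds_prod_eq] at hnear
  obtain ⟨U, hU, hUqh⟩ := eventually_prod_self_iff (r := fun x y => qhDist x y ≤ 1) |>.1 hnear
  have hfreq : ∀ N : ℝ, ∃ t ≥ N, γ t ∈ U := frequently_atTop.1 (hz.frequently hU)
  obtain ⟨s, hs, hsU⟩ := hfreq 0
  obtain ⟨t, ht, htU⟩ := hfreq (s + 2)
  have hst := hUqh _ hsU _ htU
  rw [hγ hs (by linarith : (0 : ℝ) ≤ t), abs_sub_comm] at hst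
  linarith [le_abs_self (t - s)]

theorem IsQHGeodesicRay.mapClusterPt_mem_metricBoundary (hΩ : MinimallyNice Ω)
    (hγ : IsQHGeodesicRay γ) {p : Completion Ω}
    (hp : MapClusterPt p atTop fun t => (γ t : Completion Ω)) : p ∈ metricBoundary Ω := by
  rintro ⟨z, rfl⟩
  exact hγ.not_mapClusterPt hΩ z <|
    (Completion.isUniformInducing_coe Ω).isInducing.mapClusterPt_iff.1 hp

theorem IsQHGeodesicRay.eq_of_mapClusterPt (hΩ : MinimallyNice Ω)
    (hvis : QHVisible Ω) (hγ : IsQHGeodesicRay γ) {p q : Completion Ω}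
    (hp : MapClusterPt p atTop fun t => (γ t : Completion Ω))
    (hq : MapClusterPt q atTop fun t => (γ t : Completion Ω)) : p = q := by
  by_contra hpq
  obtain ⟨K, hK, hmeet⟩ := hvis p q (hγ.mapClusterPt_mem_metricBoundary hΩ hp)
    (hγ.mapClusterPt_mem_metricBoundary hΩ hq) hpq
  obtain ⟨s, hγs, hs⟩ := hp.exists_seq_tendsto
  obtain ⟨u, hsu, hγu⟩ := hq.exists_seq_ge_tendsto s
  have hfreq : ∃ᶠ t in atTop, γ t ∈ K := by
    refine frequently_atTop.2 fun N => ?_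
    obtain ⟨n, hn⟩ := (hs.eventually_ge_atTop (max N 0)).exists
    obtain ⟨t, ht, htK⟩ := hmeet (γ ∘ s) (γ ∘ u) hγs hγu n γ (s n) (u n)
      (hγ.isQHGeodesicSeg ((le_max_right N 0).trans hn) (hsu n))
    exact ⟨t, (le_max_left N 0).trans (hn.trans ht.1), htK⟩
  obtain ⟨w, -, hw⟩ := hK.exists_mapClusterPt_of_frequently hfreq
  exact hγ.not_mapClusterPt hΩ w hw

end GeodesicRay

theorem qhGeodesicRay_lands_general
    {Ω : Type*} [MetricSpace Ω]
    (hnice : MinimallyNice Ω)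
    (hcpt : CompactSpace (UniformSpace.Completion Ω))
    (hvis : QHVisible Ω)
    (γ : ℝ → Ω) (hγ : IsQHGeodesicRay γ) :
    ∃ p ∈ metricBoundary Ω,
      Filter.Tendsto (fun t : ℝ => ((γ t : Ω) : UniformSpace.Completion Ω))
        Filter.atTop (nhds p) := by
  obtain ⟨p, hp⟩ := exists_clusterPt_of_compactSpace (map (fun t => (γ t : Completion Ω)) atTop)
  exact ⟨p, hγ.mapClusterPt_mem_metricBoundary hnice hp,
    tendsto_nhds_of_unique_mapClusterPt fun q hq => hγ.eq_of_mapClusterPt hnice hvis hq hp⟩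

/-- **Lemma 4.3.**  In a bounded minimally nice, quasihyperbolically visible space with
compact metric completion, every quasihyperbolic geodesic ray lands at a point of the metric
boundary: `lim_{t→∞} γ(t)` exists in the metric `d` and belongs to `∂_dΩ`. -/
theorem qhGeodesicRay_lands
    {Ω : Type*} [MetricSpace Ω]
    (hnice : MinimallyNice Ω)
    (hbdd : Bornology.IsBounded (Set.univ : Set Ω))
    (hcpt : CompactSpace (UniformSpace.Completion Ω))
    (hvis : QHVisible Ω)
    (γ : ℝ → Ω) (hγ : IsQHGeodesicRay γ) :
    ∃ p ∈ metricBoundary Ω,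
      Filter.Tendsto (fun t : ℝ => ((γ t : Ω) : UniformSpace.Completion Ω))
        Filter.atTop (nhds p) :=
  qhGeodesicRay_lands_general hnice hcpt hvis γ hγ
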